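/- arXiv:0805.1006 — 5 statements merged into one kernel-verified Lean document; each statement's English description precedes it below -/
import Mathlib

section
/- Let 𝒢 be a profinite group with an open pro-p subgroup, k a finite field of characteristic p, and V a smooth k-representation of 𝒢. Then V is admissible if and only if Hom_𝒢(S, V) is finite dimensional for every irreducible smooth k-representation S of 𝒢. -/
section SmoothRepDefs

variable {k : Type} [Field k] {G : Type} [Group G] [TopologicalSpace G]

/-- A subgroup `P` of a profinite group is *pro-p* if every open subgroup has
`p`-power (in particular finite) relative index in `P`. -/
def IsProP (p : ℕ) (P : Subgroup G) : Prop :=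
  ∀ Q : Subgroup G, IsOpen (Q : Set G) → ∃ m : ℕ, Q.relIndex P = p ^ m

/-- A representation `ρ` of a topological group `G` is *smooth* if every vector
has open stabilizer. -/
def IsSmoothRep {V : Type} [AddCommGroup V] [Module k V] (ρ : G →* V →ₗ[k] V) : Prop :=
  ∀ v : V, IsOpen {g : G | ρ g v = v}

/-- The subspace of `P`-invariant vectors. -/
def invariants {V : Type} [AddCommGroup V] [Module k V] (ρ : G →* V →ₗ[k] V)
    (P : Subgroup G) : Submodule k V where
  carrier := {v | ∀ g ∈ P, ρ g v = v}
  add_mem' := fun {a b} ha hb g hg => by simp [map_add, ha g hg, hb g hg]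
  zero_mem' := fun g hg => map_zero _
  smul_mem' := fun c v hv g hg => by simp [map_smul, hv g hg]

/-- A smooth representation is *admissible* if the invariants under every open
pro-p subgroup are finite dimensional. -/
def IsAdmissibleRep (p : ℕ) {V : Type} [AddCommGroup V] [Module k V]
    (ρ : G →* V →ₗ[k] V) : Prop :=
  ∀ P : Subgroup G, IsOpen (P : Set G) → IsProP p P →
    FiniteDimensional k (invariants ρ P)

/-- Irreducibility: `V` is nonzero and has no invariant subspaces besides `⊥`, `⊤`. -/
def IsIrrRep {V : Type} [AddCommGroup V] [Module k V] (ρ : G →* V →ₗ[k] V) : Prop :=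
  Nontrivial V ∧ ∀ U : Submodule k V, (∀ g v, v ∈ U → ρ g v ∈ U) → U = ⊥ ∨ U = ⊤

/-- The space `Hom_G(A, B)` of equivariant linear maps. -/
def equivHom {A B : Type} [AddCommGroup A] [Module k A] [AddCommGroup B] [Module k B]
    (ρA : G →* A →ₗ[k] A) (ρB : G →* B →ₗ[k] B) : Submodule k (A →ₗ[k] B) where
  carrier := {f | ∀ g a, f (ρA g a) = ρB g (f a)}
  add_mem' := fun {f₁ f₂} h₁ h₂ g a => by simp [h₁ g a, h₂ g a, map_add]
  zero_mem' := fun g a => by simp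
  smul_mem' := fun c f hf g a => by simp [hf g a, map_smul]

end SmoothRepDefs

/-!
If `V` is admissible and `S` is irreducible, pick `s ≠ 0` in `S`. Its stabilizer is open, so it
meets the given open pro-`p` subgroup in an open pro-`p` subgroup `Q`, and by irreducibility
`f ↦ f s` embeds `Hom_G(S, V)` into the finite dimensional space `V^Q`.

Conversely, dévissage along a composition series shows that `Hom_G(T, V)` is finite dimensional
for every finite dimensional smooth `T`. For an open subgroup `P`, which has finite index since
`G` is compact, Frobenius reciprocity embeds `V^P` into `Hom_G(k[G/P], V)`.
-/

section Stabilizer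

variable {k : Type} [Field k] {G : Type} [Group G] {V : Type} [AddCommGroup V] [Module k V]

def repStabilizer (ρ : Representation k G V) (v : V) : Subgroup G where
  carrier := {g | ρ g v = v}
  one_mem' := by simp
  mul_mem' {a b} ha hb := by simp_all
  inv_mem' {g} hg := by
    change ρ g v = v at hg
    change ρ g⁻¹ v = v
    nth_rw 1 [← hg]
    exact ρ.inv_self_apply g v

lemma IsSmoothRep.isOpen_repStabilizer [TopologicalSpace G] {ρ : Representation k G V}
    (hρ : IsSmoothRep ρ) (v : V) :
    IsOpen (repStabilizer ρ v : Set G) :=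
  hρ v

end Stabilizer

lemma IsProP.inf_of_isOpen {G : Type} [Group G] [TopologicalSpace G]
    {p : ℕ} (hp : p.Prime) {P Q : Subgroup G} (hP : IsProP p P) (hQ : IsOpen (Q : Set G)) :
    IsProP p (Q ⊓ P) := by
  intro R hR
  obtain ⟨m, hm⟩ := hP (R ⊓ Q) (hR.inter hQ)
  have hdvd : R.relIndex (Q ⊓ P) ∣ p ^ m :=
    hm ▸ Dvd.intro _ (Subgroup.relIndex_inf_mul_relIndex R Q P)
  obtain ⟨n, -, hn⟩ := (Nat.dvd_prime_pow hp).mp hdvd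
  exact ⟨n, hn⟩

section Forward

variable {k : Type} [Field k] {G : Type} [Group G]
  {S V : Type} [AddCommGroup S] [Module k S] [AddCommGroup V] [Module k V]
  {ρS : Representation k G S} {ρ : Representation k G V}

lemma apply_mem_invariants {f : S →ₗ[k] V} (hf : f ∈ equivHom ρS ρ) {s : S} {P : Subgroup G}
    (hP : P ≤ repStabilizer ρS s) : f s ∈ invariants ρ P := fun g hg => by
  rw [← hf g s, show ρS g s = s from hP hg]

lemma IsIrrRep.eq_zero_of_mem_equivHom_of_apply_eq_zero (hS : IsIrrRep ρS) {f : S →ₗ[k] V}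
    (hf : f ∈ equivHom ρS ρ) {s : S} (hs : s ≠ 0) (hfs : f s = 0) : f = 0 := by
  have hker : ∀ g v, v ∈ LinearMap.ker f → ρS g v ∈ LinearMap.ker f := fun g v hv => by
    rw [LinearMap.mem_ker] at hv ⊢
    rw [hf g v, hv, map_zero]
  rcases hS.2 _ hker with hbot | htop
  · exact absurd (hbot ▸ hfs : s ∈ (⊥ : Submodule k S)) (by simpa using hs)
  · exact LinearMap.ker_eq_top.mp htop

theorem finiteDimensional_equivHom_of_isAdmissibleRep [TopologicalSpace G] {p : ℕ} (hp : p.Prime)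
    (hP : ∃ P : Subgroup G, IsOpen (P : Set G) ∧ IsProP p P) (hadm : IsAdmissibleRep p ρ)
    (hS : IsSmoothRep ρS) (hirr : IsIrrRep ρS) : FiniteDimensional k (equivHom ρS ρ) := by
  obtain ⟨P, hPo, hPp⟩ := hP
  have := hirr.1
  obtain ⟨s, hs⟩ := exists_ne (0 : S)
  have hQ := hS.isOpen_repStabilizer s
  have := hadm _ (hQ.inter hPo) (hPp.inf_of_isOpen hp hQ)
  let eval : equivHom ρS ρ →ₗ[k] invariants ρ (repStabilizer ρS s ⊓ P) :=
    ((LinearMap.applyₗ s).comp (equivHom ρS ρ).subtype).codRestrict _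
      fun f => apply_mem_invariants f.2 inf_le_left
  refine FiniteDimensional.of_injective eval ((injective_iff_map_eq_zero eval).mpr fun f hf => ?_)
  exact Subtype.ext (hirr.eq_zero_of_mem_equivHom_of_apply_eq_zero f.2 hs (congrArg Subtype.val hf))

end Forward

section Irreducible

variable {k : Type} [Field k] {G : Type} [Group G] {T : Type} [AddCommGroup T] [Module k T]

lemma exists_subrepresentation_isIrrRep [FiniteDimensional k T] [Nontrivial T]
    (ρT : Representation k G T) : ∃ U : Subrepresentation ρT, IsIrrRep U.toRepresentation := by
  obtain ⟨U, ⟨hU0, hUinv⟩, hmin⟩ := wellFounded_lt.has_min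
    {W : Submodule k T | W ≠ ⊥ ∧ ∀ g v, v ∈ W → ρT g v ∈ W}
    ⟨⊤, top_ne_bot, fun _ _ _ => Submodule.mem_top⟩
  refine ⟨⟨U, fun g v hv => hUinv g v hv⟩, Submodule.nontrivial_iff_ne_bot.mpr hU0,
    fun W hW => or_iff_not_imp_left.mpr fun hW0 => ?_⟩
  have hinj := Submodule.map_injective_of_injective U.injective_subtype
  have hmap_inv : ∀ g v, v ∈ W.map U.subtype → ρT g v ∈ W.map U.subtype := by
    rintro g _ ⟨w, hw, rfl⟩
    exact ⟨_, hW g w hw, rfl⟩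
  have hmap_ne : W.map U.subtype ≠ ⊥ := by
    rwa [← Submodule.map_bot U.subtype, hinj.ne_iff]
  have hmap_eq : W.map U.subtype = U := by
    by_contra hne
    exact hmin _ ⟨hmap_ne, hmap_inv⟩ (lt_of_le_of_ne (Submodule.map_subtype_le U W) hne)
  exact hinj (hmap_eq.trans (Submodule.map_subtype_top U).symm)

end Irreducible

section Devissage

variable {k : Type} [Field k] {G : Type} [Group G]
  {T V : Type} [AddCommGroup T] [Module k T] [AddCommGroup V] [Module k V]
  {ρT : Representation k G T} {ρ : Representation k G V}

def Subrepresentation.quotientRep (U : Subrepresentation ρT) :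
    Representation k G (T ⧸ U.toSubmodule) :=
  ρT.quotient U.toSubmodule fun g _ hv => U.apply_mem_toSubmodule g hv

lemma IsSmoothRep.subrepresentation [TopologicalSpace G] (hT : IsSmoothRep ρT)
    (U : Subrepresentation ρT) : IsSmoothRep U.toRepresentation := fun u => by
  convert hT u using 1
  ext g
  exact Subtype.ext_iff

lemma IsSmoothRep.quotientRep [TopologicalSpace G] [ContinuousMul G] (hT : IsSmoothRep ρT)
    (U : Subrepresentation ρT) : IsSmoothRep U.quotientRep := by
  intro x
  obtain ⟨v, rfl⟩ := Submodule.Quotient.mk_surjective _ x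
  refine Subgroup.isOpen_mono (H₂ := repStabilizer U.quotientRep (Submodule.Quotient.mk v))
    (fun g (hg : ρT g v = v) => ?_) (hT.isOpen_repStabilizer v)
  change Submodule.Quotient.mk (ρT g v) = _
  rw [hg]

lemma finiteDimensional_equivHom_of_subrepresentation (U : Subrepresentation ρT)
    [FiniteDimensional k (equivHom U.toRepresentation ρ)]
    [FiniteDimensional k (equivHom U.quotientRep ρ)] :
    FiniteDimensional k (equivHom ρT ρ) := by
  let restrict := LinearMap.lcomp k V U.toSubmodule.subtype
  have hmap : (equivHom ρT ρ).map restrict ≤ equivHom U.toRepresentation ρ := by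
    rintro _ ⟨f, hf, rfl⟩ g u
    exact hf g u
  have hker : equivHom ρT ρ ⊓ LinearMap.ker restrict ≤
      (equivHom U.quotientRep ρ).map (LinearMap.lcomp k V U.toSubmodule.mkQ) := by
    rintro f ⟨hf, hfU⟩
    have hU : U.toSubmodule ≤ LinearMap.ker f := fun u hu =>
      LinearMap.congr_fun (LinearMap.mem_ker.mp hfU) ⟨u, hu⟩
    refine ⟨U.toSubmodule.liftQ f hU, fun g x => ?_, U.toSubmodule.liftQ_mkQ f hU⟩
    obtain ⟨v, rfl⟩ := Submodule.Quotient.mk_surjective _ x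
    exact hf g v
  rw [← Submodule.fg_iff_finiteDimensional]
  exact Submodule.fg_of_fg_map_of_fg_inf_ker restrict
    ((Submodule.fg_iff_finiteDimensional _).mpr (Submodule.finiteDimensional_of_le hmap))
    ((Submodule.fg_iff_finiteDimensional _).mpr (Submodule.finiteDimensional_of_le hker))

theorem finiteDimensional_equivHom_of_finiteDimensional [TopologicalSpace G] [ContinuousMul G]
    (hirr : ∀ (S : Type) (_ : AddCommGroup S) (_ : Module k S) (ρS : G →* S →ₗ[k] S),
      IsSmoothRep ρS → IsIrrRep ρS → FiniteDimensional k (equivHom ρS ρ))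
    [FiniteDimensional k T] (hT : IsSmoothRep ρT) : FiniteDimensional k (equivHom ρT ρ) := by
  induction hn : Module.finrank k T using Nat.strong_induction_on generalizing T with
  | _ n ih =>
  rcases subsingleton_or_nontrivial T with hT0 | hT0
  · infer_instance
  obtain ⟨U, hU⟩ := exists_subrepresentation_isIrrRep ρT
  have := hirr _ _ _ _ (hT.subrepresentation U) hU
  have : Nontrivial U.toSubmodule := hU.1
  have hlt : Module.finrank k (T ⧸ U.toSubmodule) < n := by
    have := Submodule.finrank_quotient_add_finrank U.toSubmodule
    have : 0 < Module.finrank k U.toSubmodule := Module.finrank_pos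
    omega
  have := ih _ hlt (hT.quotientRep U) rfl
  exact finiteDimensional_equivHom_of_subrepresentation U

end Devissage

section Permutation

variable (k : Type) [Field k] {G : Type} [Group G] (X : Type) [MulAction G X]

def permutationRep : Representation k G (X → k) where
  toFun g := LinearMap.funLeft k k (g⁻¹ • ·)
  map_one' := by ext; simp
  map_mul' g h := by ext; simp [mul_smul]

variable {k X}

@[simp]
lemma permutationRep_apply (g : G) (f : X → k) (x : X) :
    permutationRep k X g f x = f (g⁻¹ • x) :=
  rfl

lemma isSmoothRep_permutationRep [TopologicalSpace G] [ContinuousMul G]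
    (hX : IsOpen ((MulAction.toPermHom G X).ker : Set G)) :
    IsSmoothRep (permutationRep k X (G := G)) :=
  fun f => Subgroup.isOpen_mono (H₂ := repStabilizer _ f) (fun g hg => funext fun x => by
    simpa using congrArg (f <| · x) (Subgroup.inv_mem _ hg)) hX

end Permutation

lemma Subgroup.isOpen_normalCore {G : Type} [Group G] [TopologicalSpace G] [IsTopologicalGroup G]
    [CompactSpace G] {P : Subgroup G} (hP : IsOpen (P : Set G)) :
    IsOpen (P.normalCore : Set G) :=
  have : Finite (G ⧸ P) := P.quotient_finite_of_isOpen hP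
  have : P.FiniteIndex := Subgroup.finiteIndex_of_finite_quotient
  P.normalCore.isOpen_of_isClosed_of_finiteIndex (P.normalCore_isClosed (P.isClosed_of_isOpen hP))

section Frobenius

variable {k : Type} [Field k] {G : Type} [Group G] {V : Type} [AddCommGroup V] [Module k V]
  {ρ : Representation k G V} {P : Subgroup G}

lemma apply_eq_of_mem_invariants {w : V} (hw : w ∈ invariants ρ P) {a b : G}
    (hab : (a : G ⧸ P) = b) : ρ a w = ρ b w := by
  rw [← mul_inv_cancel_left a b, map_mul, Module.End.mul_apply, hw _ (QuotientGroup.eq.mp hab)]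

variable [Fintype (G ⧸ P)]

lemma linearCombination_mem_equivHom {w : V} (hw : w ∈ invariants ρ P) :
    Fintype.linearCombination k (fun x : G ⧸ P => ρ x.out w) ∈
      equivHom (permutationRep k (G ⧸ P)) ρ := by
  intro g f
  simp only [Fintype.linearCombination_apply, permutationRep_apply, map_sum, map_smul]
  refine Fintype.sum_equiv (MulAction.toPerm g⁻¹) _ _ fun x => ?_
  rw [← Module.End.mul_apply, ← map_mul]
  refine congrArg _ (apply_eq_of_mem_invariants hw ?_)
  rw [QuotientGroup.out_eq', ← smul_eq_mul, MulAction.Quotient.mk_smul_out]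
  exact (smul_inv_smul g x).symm

variable (ρ P) in
noncomputable def invariantsToEquivHom :
    invariants ρ P →ₗ[k] equivHom (permutationRep k (G ⧸ P)) ρ where
  toFun w := ⟨_, linearCombination_mem_equivHom w.2⟩
  map_add' w w' := by
    ext f
    simp [Fintype.linearCombination_apply, Finset.sum_add_distrib]
  map_smul' c w := by
    ext f
    simp [Fintype.linearCombination_apply, Finset.smul_sum, smul_comm (f _) c]

lemma invariantsToEquivHom_apply_single [DecidableEq (G ⧸ P)] (w : invariants ρ P) :
    (invariantsToEquivHom ρ P w : (G ⧸ P → k) →ₗ[k] V) (Pi.single ((1 : G) : G ⧸ P) 1) = w := by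
  change Fintype.linearCombination k _ _ = _
  rw [Fintype.linearCombination_apply_single, one_smul,
    apply_eq_of_mem_invariants w.2 (QuotientGroup.out_eq' _), map_one, Module.End.one_apply]

lemma invariantsToEquivHom_injective : Function.Injective (invariantsToEquivHom ρ P) := by
  classical
  intro w w' h
  have := LinearMap.congr_fun (congrArg Subtype.val h) (Pi.single ((1 : G) : G ⧸ P) 1)
  rwa [invariantsToEquivHom_apply_single, invariantsToEquivHom_apply_single,
    SetLike.coe_eq_coe] at this

end Frobenius

theorem admissible_iff_finite_hom_from_irreducibles_general
    (p : ℕ) [Fact p.Prime] (k : Type) [Field k]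
    (G : Type) [Group G] [TopologicalSpace G] [IsTopologicalGroup G]
    [CompactSpace G]
    (hP : ∃ P : Subgroup G, IsOpen (P : Set G) ∧ IsProP p P)
    (V : Type) [AddCommGroup V] [Module k V]
    (ρ : G →* V →ₗ[k] V) :
    IsAdmissibleRep p ρ ↔
      ∀ (S : Type) (_ : AddCommGroup S) (_ : Module k S) (ρS : G →* S →ₗ[k] S),
        IsSmoothRep ρS → IsIrrRep ρS → FiniteDimensional k (equivHom ρS ρ) := by
  refine ⟨fun hadm S _ _ ρS hS hirr =>
    finiteDimensional_equivHom_of_isAdmissibleRep Fact.out hP hadm hS hirr, fun hirr P hPo _ => ?_⟩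
  have : Fintype (G ⧸ P) := @Fintype.ofFinite _ (P.quotient_finite_of_isOpen hPo)
  have := finiteDimensional_equivHom_of_finiteDimensional hirr
    (isSmoothRep_permutationRep (k := k) (P.normalCore_eq_ker ▸ P.isOpen_normalCore hPo))
  exact FiniteDimensional.of_injective _ invariantsToEquivHom_injective

/-- Let `𝒢` be a profinite group with an open pro-p subgroup, `k` a finite
field of characteristic `p`, and `V` a smooth `k`-representation of `𝒢`.  Then `V` is
admissible if and only if `Hom_𝒢(S, V)` is finite dimensional for every irreducible
smooth `k`-representation `S` of `𝒢`. -/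
theorem admissible_iff_finite_hom_from_irreducibles
    (p : ℕ) [Fact p.Prime] (k : Type) [Field k] [Fintype k] [CharP k p]
    (G : Type) [Group G] [TopologicalSpace G] [IsTopologicalGroup G]
    [CompactSpace G] [TotallyDisconnectedSpace G] [T2Space G]
    (hP : ∃ P : Subgroup G, IsOpen (P : Set G) ∧ IsProP p P)
    (V : Type) [AddCommGroup V] [Module k V]
    (ρ : G →* V →ₗ[k] V) (hsm : IsSmoothRep ρ) :
    IsAdmissibleRep p ρ ↔
      ∀ (S : Type) (_ : AddCommGroup S) (_ : Module k S) (ρS : G →* S →ₗ[k] S),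
        IsSmoothRep ρS → IsIrrRep ρS → FiniteDimensional k (equivHom ρS ρ) :=
  admissible_iff_finite_hom_from_irreducibles_general p k G hP V ρ
end

section
/- Let 𝒫 be a pro-p group and k a finite field of characteristic p. Let C(𝒫, k) denote the space of continuous (i.e. locally constant) functions from 𝒫 to k, with 𝒫 acting by right translation. Then the inclusion of the constant functions, k ↪ C(𝒫, k), is an injective envelope of the trivial representation in the category of smooth k-representations of 𝒫. -/
section Stmt2

variable (k : Type) [Field k] (G : Type) [Group G] [TopologicalSpace G] [IsTopologicalGroup G]

/-- The right translation action of `G` on the space `C(G, k)` of locally constant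
(`= continuous`, for `k` discrete) functions `G → k`. -/
def rightTranslation : G →* (LocallyConstant G k →ₗ[k] LocallyConstant G k) where
  toFun g :=
    { toFun := fun f => ⟨fun x => f (x * g),
        f.isLocallyConstant.comp_continuous (continuous_mul_right g)⟩
      map_add' := fun f₁ f₂ => by ext x; rfl
      map_smul' := fun c f => by ext x; rfl }
  map_one' := by ext f x; simp
  map_mul' := fun g h => by ext f x; simp [mul_assoc]

end Stmt2


open MulAction

section ProP

variable {G : Type} [Group G] [TopologicalSpace G] {p : ℕ}

theorem IsProP.exists_index_eq_pow (hP : IsProP p (⊤ : Subgroup G)) {H : Subgroup G}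
    (hH : IsOpen (H : Set G)) : ∃ m : ℕ, H.index = p ^ m := by
  simpa only [Subgroup.relIndex_top_right] using hP H hH

variable {X : Type} [MulAction G X]

theorem IsProP.finite_orbit (hP : IsProP p (⊤ : Subgroup G)) (hp : p ≠ 0) {x : X}
    (hx : IsOpen (stabilizer G x : Set G)) : (orbit G x).Finite := by
  obtain ⟨m, hm⟩ := hP.exists_index_eq_pow hx
  refine Set.finite_of_ncard_ne_zero ?_
  rw [← index_stabilizer, hm]
  exact pow_ne_zero m hp

theorem IsProP.isPGroup_range_toPermHom [Finite X] (hP : IsProP p (⊤ : Subgroup G))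
    (hX : ∀ x : X, IsOpen (stabilizer G x : Set G)) : IsPGroup p (toPermHom G X).range := by
  have hker : ((toPermHom G X).ker : Set G) = ⋂ x : X, (stabilizer G x : Set G) := by
    ext g
    simp [Equiv.Perm.ext_iff]
  obtain ⟨m, hm⟩ := hP.exists_index_eq_pow (hker ▸ isOpen_iInter_of_finite hX)
  exact IsPGroup.of_card ((Subgroup.index_ker (toPermHom G X)).symm.trans hm)

theorem IsProP.exists_fixed_point_ne_of_prime_dvd_card [Fact p.Prime] [Finite X]
    (hP : IsProP p (⊤ : Subgroup G)) (hX : ∀ x : X, IsOpen (stabilizer G x : Set G))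
    (hpX : p ∣ Nat.card X) {x : X} (hx : ∀ g : G, g • x = x) : ∃ y ≠ x, ∀ g : G, g • y = y := by
  have hfixed : ∀ y : X, y ∈ fixedPoints (toPermHom G X).range X ↔ ∀ g : G, g • y = y :=
    fun y => ⟨fun h g => h ⟨toPermHom G X g, g, rfl⟩, by rintro h ⟨_, g, rfl⟩; exact h g⟩
  obtain ⟨y, hy, hxy⟩ := (hP.isPGroup_range_toPermHom hX)
    |>.exists_fixed_point_of_prime_dvd_card_of_fixed_point X hpX ((hfixed x).2 hx)
  exact ⟨y, hxy.symm, (hfixed y).1 hy⟩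

end ProP

section SmoothRep

variable {k : Type} [Field k] {G : Type} [Group G] {V : Type} [AddCommGroup V] [Module k V]

def cyclicSubrepresentation (ρ : G →* V →ₗ[k] V) (v : V) : Subrepresentation ρ where
  toSubmodule := Submodule.span k (Set.range fun g => ρ g v)
  apply_mem_toSubmodule g := fun _ hw =>
    (Submodule.span_le (s := Set.range fun h => ρ h v)
      (p := (Submodule.span k (Set.range fun h => ρ h v)).comap (ρ g))).2
      (by rintro _ ⟨h, rfl⟩; exact Submodule.subset_span ⟨g * h, by simp⟩) hw

theorem mem_cyclicSubrepresentation_self (ρ : G →* V →ₗ[k] V) (v : V) :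
    v ∈ cyclicSubrepresentation ρ v :=
  Submodule.subset_span ⟨1, by simp⟩

variable {ρ : G →* V →ₗ[k] V}

theorem cyclicSubrepresentation_le {U : Subrepresentation ρ} {v : V} (hv : v ∈ U) :
    cyclicSubrepresentation ρ v ≤ U := fun _ hw =>
  (Submodule.span_le (s := Set.range fun g => ρ g v) (p := U.toSubmodule)).2
    (by rintro _ ⟨g, rfl⟩; exact U.apply_mem_toSubmodule g hv) hw

theorem Subrepresentation.coe_toRepresentation_apply (W : Subrepresentation ρ) (g : G)
    (w : W.toSubmodule) : (W.toRepresentation g w : V) = ρ g w :=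
  rfl

variable [TopologicalSpace G]

theorem IsSmoothRep.toRepresentation (hρ : IsSmoothRep ρ) (W : Subrepresentation ρ) :
    IsSmoothRep W.toRepresentation := by
  intro w
  simpa only [Subtype.ext_iff, Subrepresentation.coe_toRepresentation_apply] using hρ w

theorem IsSmoothRep.finite_cyclicSubrepresentation {p : ℕ} [Finite k] (hρ : IsSmoothRep ρ)
    (hP : IsProP p (⊤ : Subgroup G)) (hp : p ≠ 0) (v : V) :
    Finite (cyclicSubrepresentation ρ v).toSubmodule := by
  let _ : MulAction G V := MulAction.compHom V ρ
  have horbit : (Set.range fun g => ρ g v).Finite := hP.finite_orbit hp (hρ v)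
  have : FiniteDimensional k (cyclicSubrepresentation ρ v).toSubmodule :=
    FiniteDimensional.span_of_finite k horbit
  exact Module.finite_of_finite k

theorem IsSmoothRep.exists_fixed_ne_zero_of_finite {p : ℕ} [Fact p.Prime] [Fintype k] [CharP k p]
    [Finite V] [Nontrivial V] (hρ : IsSmoothRep ρ) (hP : IsProP p (⊤ : Subgroup G)) :
    ∃ v : V, v ≠ 0 ∧ ∀ g, ρ g v = v := by
  let _ : MulAction G V := MulAction.compHom V ρ
  have hpk : p ∣ Fintype.card k := (prime_dvd_char_iff_dvd_card p).1 (by rw [ringChar.eq k p])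
  have : Module.Finite k V := Module.Finite.of_finite
  have hpV : p ∣ Nat.card V := by
    rw [Module.natCard_eq_pow_finrank (K := k), Nat.card_eq_fintype_card]
    exact hpk.trans (dvd_pow_self _ Module.finrank_pos.ne')
  exact hP.exists_fixed_point_ne_of_prime_dvd_card hρ hpV (x := 0) fun g => map_zero (ρ g)

theorem IsSmoothRep.exists_fixed_ne_zero_mem {p : ℕ} [Fact p.Prime] [Fintype k] [CharP k p]
    (hρ : IsSmoothRep ρ) (hP : IsProP p (⊤ : Subgroup G)) (U : Subrepresentation ρ) {v : V}
    (hvU : v ∈ U) (hv : v ≠ 0) : ∃ w ∈ U, w ≠ 0 ∧ ∀ g, ρ g w = w := by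
  set W := cyclicSubrepresentation ρ v
  have := hρ.finite_cyclicSubrepresentation hP (Fact.out : p.Prime).ne_zero v
  have : Nontrivial W.toSubmodule :=
    ⟨⟨⟨v, mem_cyclicSubrepresentation_self ρ v⟩, 0, by simpa using hv⟩⟩
  obtain ⟨w, hw, hfix⟩ := (hρ.toRepresentation W).exists_fixed_ne_zero_of_finite hP
  exact ⟨w, cyclicSubrepresentation_le hvU w.2, by simpa using hw,
    fun g => congrArg Subtype.val (hfix g)⟩

end SmoothRep

section RightTranslation

variable {k : Type} [Field k] {G : Type} [Group G] [TopologicalSpace G] [IsTopologicalGroup G]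

@[simp]
theorem rightTranslation_apply (g : G) (f : LocallyConstant G k) (x : G) :
    rightTranslation k G g f x = f (x * g) :=
  rfl

theorem rightTranslation_const (g : G) (c : k) :
    rightTranslation k G g (LocallyConstant.const G c) = LocallyConstant.const G c :=
  rfl

theorem eq_const_of_forall_rightTranslation_eq {f : LocallyConstant G k}
    (hf : ∀ g, rightTranslation k G g f = f) : f = LocallyConstant.const G (f 1) := by
  ext x
  simpa using DFunLike.congr_fun (hf x) 1

theorem LocallyConstant.eventually_forall_apply_mul_eq [CompactSpace G] {X : Type}
    (f : LocallyConstant G X) :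
    ∀ᶠ g in nhds (1 : G), ∀ x, f (x * g) = f x := by
  have hP : ∀ x ∈ (Set.univ : Set G), ∀ᶠ z : G × G in nhds (1, x), f (z.2 * z.1) = f z.2 := by
    intro x _
    have hmul : ∀ᶠ z : G × G in nhds (1, x), f (z.2 * z.1) = f (x * 1) :=
      (f.isLocallyConstant.comp_continuous (continuous_snd.mul continuous_fst)).eventually_eq _
    have hsnd : ∀ᶠ z : G × G in nhds (1, x), f z.2 = f x :=
      (f.isLocallyConstant.comp_continuous continuous_snd).eventually_eq _
    filter_upwards [hmul, hsnd] with z h₁ h₂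
    rw [h₁, h₂, mul_one]
  simpa using isCompact_univ.eventually_forall_of_forall_eventually hP

theorem isSmoothRep_rightTranslation [CompactSpace G] : IsSmoothRep (rightTranslation k G) := by
  intro f
  let _ : MulAction G (LocallyConstant G k) := MulAction.compHom _ (rightTranslation k G)
  refine Subgroup.isOpen_of_mem_nhds (MulAction.stabilizer G f) (g := 1) ?_
  filter_upwards [f.eventually_forall_apply_mul_eq] with g hg
  exact LocallyConstant.ext hg

end RightTranslation

section Coinduction

variable {k : Type} [Field k] {G : Type} [Group G] [TopologicalSpace G] [IsTopologicalGroup G]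
  {W : Type} [AddCommGroup W] [Module k W] {ρ : G →* W →ₗ[k] W}

theorem IsSmoothRep.isLocallyConstant_apply (hρ : IsSmoothRep ρ) (w : W) :
    IsLocallyConstant fun g => ρ g w := by
  refine (IsLocallyConstant.iff_exists_open _).2 fun g₀ => ?_
  refine ⟨(g₀⁻¹ * ·) ⁻¹' {g | ρ g w = w}, (hρ w).preimage (continuous_const_mul g₀⁻¹),
    by simp, fun g hg => ?_⟩
  have hg : ρ (g₀⁻¹ * g) w = w := hg
  rw [← mul_inv_cancel_left g₀ g, map_mul, Module.End.mul_apply, hg]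

def IsSmoothRep.coinduced (hρ : IsSmoothRep ρ) (μ : W →ₗ[k] k) :
    W →ₗ[k] LocallyConstant G k where
  toFun w := ⟨fun g => μ (ρ g w), (hρ.isLocallyConstant_apply w).comp μ⟩
  map_add' _ _ := by ext; simp
  map_smul' _ _ := by ext; simp

@[simp]
theorem IsSmoothRep.coinduced_apply_apply (hρ : IsSmoothRep ρ) (μ : W →ₗ[k] k) (w : W) (g : G) :
    hρ.coinduced μ w g = μ (ρ g w) :=
  rfl

theorem IsSmoothRep.coinduced_apply_rho (hρ : IsSmoothRep ρ) (μ : W →ₗ[k] k) (g : G) (w : W) :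
    hρ.coinduced μ (ρ g w) = rightTranslation k G g (hρ.coinduced μ w) := by
  ext x
  simp [map_mul]

theorem apply_eq_apply_one_of_equivariant {U : Type} [AddCommGroup U] [Module k U]
    {ρU : G →* U →ₗ[k] U} {f : U →ₗ[k] LocallyConstant G k}
    (hf : ∀ g u, f (ρU g u) = rightTranslation k G g (f u)) (u : U) (g : G) :
    f u g = f (ρU g u) 1 := by
  simp [hf]

theorem IsSmoothRep.exists_equivariant_extension (hρ : IsSmoothRep ρ) {U : Type} [AddCommGroup U]
    [Module k U] {ρU : G →* U →ₗ[k] U} {ι : U →ₗ[k] W} (hι : Function.Injective ι)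
    (hιρ : ∀ g u, ι (ρU g u) = ρ g (ι u)) {f : U →ₗ[k] LocallyConstant G k}
    (hf : ∀ g u, f (ρU g u) = rightTranslation k G g (f u)) :
    ∃ h : W →ₗ[k] LocallyConstant G k,
      (∀ g w, h (ρ g w) = rightTranslation k G g (h w)) ∧ ∀ u, h (ι u) = f u := by
  obtain ⟨π, hπ⟩ := ι.exists_leftInverse_of_injective (LinearMap.ker_eq_bot.2 hι)
  refine ⟨hρ.coinduced (LocallyConstant.evalₗ k 1 ∘ₗ f ∘ₗ π), hρ.coinduced_apply_rho _,
    fun u => ?_⟩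
  ext g
  rw [hρ.coinduced_apply_apply, ← hιρ, apply_eq_apply_one_of_equivariant hf]
  simp [← LinearMap.comp_apply π ι, hπ]

end Coinduction

theorem locallyConstant_injective_envelope_of_trivial_general
    (p : ℕ) [Fact p.Prime] (k : Type) [Field k] [Fintype k] [CharP k p]
    (G : Type) [Group G] [TopologicalSpace G] [IsTopologicalGroup G]
    [CompactSpace G]
    (hproP : IsProP p (⊤ : Subgroup G)) :
    -- `C(𝒫, k)` is a smooth representation
    IsSmoothRep (rightTranslation k G) ∧
    -- the inclusion of constants is injective and equivariant
    Function.Injective (fun c : k => LocallyConstant.const G c) ∧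
    (∀ (g : G) (c : k), rightTranslation k G g (LocallyConstant.const G c) =
      LocallyConstant.const G c) ∧
    -- essential: every nonzero invariant subspace meets the constants nontrivially
    (∀ U : Submodule k (LocallyConstant G k),
      (∀ (g : G) (f : LocallyConstant G k), f ∈ U → rightTranslation k G g f ∈ U) →
      U ≠ ⊥ → ∃ c : k, c ≠ 0 ∧ LocallyConstant.const G c ∈ U) ∧
    -- injectivity relative to smooth representations
    (∀ (U W : Type) (_ : AddCommGroup U) (_ : Module k U) (_ : AddCommGroup W)
        (_ : Module k W) (ρU : G →* U →ₗ[k] U) (ρW : G →* W →ₗ[k] W),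
      IsSmoothRep ρU → IsSmoothRep ρW →
      ∀ ι : U →ₗ[k] W, Function.Injective ι → (∀ g u, ι (ρU g u) = ρW g (ι u)) →
      ∀ f : U →ₗ[k] LocallyConstant G k,
        (∀ g u, f (ρU g u) = rightTranslation k G g (f u)) →
        ∃ h : W →ₗ[k] LocallyConstant G k,
          (∀ g w, h (ρW g w) = rightTranslation k G g (h w)) ∧ ∀ u, h (ι u) = f u) := by
  refine ⟨isSmoothRep_rightTranslation, fun _ _ h => by simpa using DFunLike.congr_fun h 1,
    rightTranslation_const, ?_, ?_⟩
  · intro U hU hU0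
    obtain ⟨f, hfU, hf⟩ := Submodule.exists_mem_ne_zero_of_ne_bot hU0
    obtain ⟨w, hwU, hw, hfix⟩ :=
      isSmoothRep_rightTranslation.exists_fixed_ne_zero_mem hproP ⟨U, fun g _ => hU g _⟩ hfU hf
    rw [eq_const_of_forall_rightTranslation_eq hfix] at hwU hw
    exact ⟨w 1, fun h => hw (by rw [h]; rfl), hwU⟩
  · intro _ _ _ _ _ _ _ _ _ hsW _ hι hιρ _ hf
    exact hsW.exists_equivariant_extension hι hιρ hf

/-- Let `𝒫` be a pro-p group and `k` a finite field of characteristic `p`.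
Then the inclusion of the constant functions `k ↪ C(𝒫, k)` is an injective envelope of
the trivial representation in the category of smooth `k`-representations of `𝒫`:
the inclusion is an injective equivariant map of smooth representations, it is
essential (every nonzero invariant subspace contains a nonzero constant function),
and `C(𝒫, k)` is an injective object relative to smooth representations. -/
theorem locallyConstant_injective_envelope_of_trivial
    (p : ℕ) [Fact p.Prime] (k : Type) [Field k] [Fintype k] [CharP k p]
    (G : Type) [Group G] [TopologicalSpace G] [IsTopologicalGroup G]
    [CompactSpace G] [TotallyDisconnectedSpace G] [T2Space G]
    (hproP : IsProP p (⊤ : Subgroup G)) :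
    -- `C(𝒫, k)` is a smooth representation
    IsSmoothRep (rightTranslation k G) ∧
    -- the inclusion of constants is injective and equivariant
    Function.Injective (fun c : k => LocallyConstant.const G c) ∧
    (∀ (g : G) (c : k), rightTranslation k G g (LocallyConstant.const G c) =
      LocallyConstant.const G c) ∧
    -- essential: every nonzero invariant subspace meets the constants nontrivially
    (∀ U : Submodule k (LocallyConstant G k),
      (∀ (g : G) (f : LocallyConstant G k), f ∈ U → rightTranslation k G g f ∈ U) →
      U ≠ ⊥ → ∃ c : k, c ≠ 0 ∧ LocallyConstant.const G c ∈ U) ∧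
    -- injectivity relative to smooth representations
    (∀ (U W : Type) (_ : AddCommGroup U) (_ : Module k U) (_ : AddCommGroup W)
        (_ : Module k W) (ρU : G →* U →ₗ[k] U) (ρW : G →* W →ₗ[k] W),
      IsSmoothRep ρU → IsSmoothRep ρW →
      ∀ ι : U →ₗ[k] W, Function.Injective ι → (∀ g u, ι (ρU g u) = ρW g (ι u)) →
      ∀ f : U →ₗ[k] LocallyConstant G k,
        (∀ g u, f (ρU g u) = rightTranslation k G g (f u)) →
        ∃ h : W →ₗ[k] LocallyConstant G k,
          (∀ g w, h (ρW g w) = rightTranslation k G g (h w)) ∧ ∀ u, h (ι u) = f u) :=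
  locallyConstant_injective_envelope_of_trivial_general p k G hproP
end

section
/- Let 𝒢 be a profinite group with an open pro-p subgroup, k a finite field. Suppose every irreducible smooth k-representation of 𝒢 is absolutely irreducible. Let S be an irreducible smooth k-representation of 𝒢 and I_S an injective envelope of S in the category of smooth k-representations of 𝒢 over k. Then for any field extension k' of k, the representation I_S ⊗_k k' is an injective envelope of S ⊗_k k' in the category of smooth k'-representations of 𝒢. -/
section MoreDefs

variable {k : Type} [Field k] {G : Type} [Group G] [TopologicalSpace G]

/-- A representation `J` is an injective object relative to the smooth representations:
any equivariant map into `J` extends along any equivariant embedding of smooth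
representations. -/
def IsInjObjRel {J : Type} [AddCommGroup J] [Module k J] (ρJ : G →* J →ₗ[k] J) : Prop :=
  ∀ (U W : Type) (_ : AddCommGroup U) (_ : Module k U) (_ : AddCommGroup W)
      (_ : Module k W) (ρU : G →* U →ₗ[k] U) (ρW : G →* W →ₗ[k] W),
    IsSmoothRep ρU → IsSmoothRep ρW →
    ∀ ι : U →ₗ[k] W, Function.Injective ι → (∀ g u, ι (ρU g u) = ρW g (ι u)) →
    ∀ f : U →ₗ[k] J, (∀ g u, f (ρU g u) = ρJ g (f u)) →
    ∃ h : W →ₗ[k] J, (∀ g w, h (ρW g w) = ρJ g (h w)) ∧ ∀ u, h (ι u) = f u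

/-- `ι : V → I` is an essential equivariant embedding. -/
def IsEssentialEmb {V I : Type} [AddCommGroup V] [Module k V] [AddCommGroup I]
    [Module k I] (ρV : G →* V →ₗ[k] V) (ρI : G →* I →ₗ[k] I) (ι : V →ₗ[k] I) : Prop :=
  Function.Injective ι ∧ (∀ g v, ι (ρV g v) = ρI g (ι v)) ∧
    ∀ U : Submodule k I, (∀ g x, x ∈ U → ρI g x ∈ U) → U ≠ ⊥ →
      ∃ x ∈ U, x ≠ 0 ∧ x ∈ LinearMap.range ι

/-- `ι : V → I` is an injective envelope of `V` in the category of smooth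
representations. -/
def IsInjEnvelopeRep {V I : Type} [AddCommGroup V] [Module k V] [AddCommGroup I]
    [Module k I] (ρV : G →* V →ₗ[k] V) (ρI : G →* I →ₗ[k] I) (ι : V →ₗ[k] I) : Prop :=
  IsInjObjRel ρI ∧ IsEssentialEmb ρV ρI ι

end MoreDefs

/-- A bundled smooth representation. -/
structure SmoothRepB (k : Type) [Field k] (G : Type) [Group G] [TopologicalSpace G] where
  V : Type
  [acg : AddCommGroup V]
  [mod : Module k V]
  ρ : G →* V →ₗ[k] V
  smooth : IsSmoothRep ρ

attribute [instance] SmoothRepB.acg SmoothRepB.mod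

/-- Isomorphism of representations. -/
def RepIsoB {k : Type} [Field k] {G : Type} [Group G] [TopologicalSpace G]
    (A B : SmoothRepB k G) : Prop :=
  ∃ e : A.V ≃ₗ[k] B.V, ∀ g v, e (A.ρ g v) = B.ρ g (e v)

open scoped TensorProduct

/-- The base change of a representation along a field extension `k ⊆ k'`. -/
noncomputable def bcRep {k : Type} [Field k] {G : Type} [Group G]
    (k' : Type) [Field k'] [Algebra k k'] {V : Type} [AddCommGroup V] [Module k V]
    (ρ : G →* V →ₗ[k] V) : G →* (k' ⊗[k] V) →ₗ[k'] (k' ⊗[k] V) where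
  toFun g := (ρ g).baseChange k'
  map_one' := by
    simp only [map_one, Module.End.one_eq_id]
    exact LinearMap.baseChange_id ..
  map_mul' := fun g h => by
    simp only [map_mul, Module.End.mul_eq_comp]
    exact LinearMap.baseChange_comp ..

/-!
Every simple subrepresentation of `I` lies in `S`, because `S ⊆ I` is essential. Viewed over `k`,
`k' ⊗ I` is a sum of copies of `I`: contracting against the functionals `k' → k` maps a simple
`k`-subrepresentation of `k' ⊗ I` to zero or to a simple subrepresentation of `I`, so it lies in
`k' ⊗ S`. A nonzero invariant `k'`-subspace of `k' ⊗ I` contains a simple `k`-subrepresentation,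
since orbits in a smooth representation of a compact group are finite; so `k' ⊗ S ⊆ k' ⊗ I` is
essential.

For injectivity, the matrix coefficients of a linear left inverse `I → S` of the embedding
embed `I` into the representation `C(G, S)` of locally constant functions. That embedding is
injective because it is injective on the essential subspace `S`, and `C(G, S)` is injective by
Frobenius reciprocity, so `I` is a retract of `C(G, S)`. Hence `k' ⊗ I` is a retract of
`k' ⊗ C(G, S) ≅ C(G, k' ⊗ S)`, which is injective.
-/

section Equivariance

variable {G : Type} [Group G]

def IsEquivariant {K₁ K₂ V W : Type} [Semiring K₁] [Semiring K₂] [AddCommMonoid V] [Module K₁ V]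
    [AddCommMonoid W] [Module K₂ W] (ρV : G →* V →ₗ[K₁] V) (ρW : G →* W →ₗ[K₂] W)
    (f : V → W) : Prop :=
  ∀ g v, f (ρV g v) = ρW g (f v)

theorem IsEquivariant.comp {K₁ K₂ K₃ U V W : Type} [Semiring K₁] [Semiring K₂] [Semiring K₃]
    [AddCommMonoid U] [Module K₁ U] [AddCommMonoid V] [Module K₂ V] [AddCommMonoid W]
    [Module K₃ W] {ρU : G →* U →ₗ[K₁] U} {ρV : G →* V →ₗ[K₂] V} {ρW : G →* W →ₗ[K₃] W}
    {f : U → V} {g : V → W} (hg : IsEquivariant ρV ρW g) (hf : IsEquivariant ρU ρV f) :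
    IsEquivariant ρU ρW (g ∘ f) := fun x u => by
  simp only [Function.comp_apply, hf x, hg x]

theorem IsEquivariant.symm {K V W : Type} [Semiring K] [AddCommMonoid V] [Module K V]
    [AddCommMonoid W] [Module K W] {ρV : G →* V →ₗ[K] V} {ρW : G →* W →ₗ[K] W}
    {e : V ≃ₗ[K] W} (he : IsEquivariant ρV ρW e) : IsEquivariant ρW ρV e.symm := fun g w => by
  rw [e.symm_apply_eq, he, e.apply_symm_apply]

variable {k : Type} [Field k] (k' : Type) [Field k'] [Algebra k k']

@[simp]
theorem bcRep_apply {V : Type} [AddCommGroup V] [Module k V] (ρ : G →* V →ₗ[k] V) (g : G) :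
    bcRep k' ρ g = (ρ g).baseChange k' :=
  rfl

theorem IsEquivariant.baseChange {V W : Type} [AddCommGroup V] [Module k V] [AddCommGroup W]
    [Module k W] {ρV : G →* V →ₗ[k] V} {ρW : G →* W →ₗ[k] W} {f : V →ₗ[k] W}
    (hf : IsEquivariant ρV ρW f) :
    IsEquivariant (bcRep k' ρV) (bcRep k' ρW) (f.baseChange k') := by
  intro g x
  have : f ∘ₗ ρV g = ρW g ∘ₗ f := LinearMap.ext (hf g)
  simp only [bcRep_apply, ← LinearMap.comp_apply, ← LinearMap.baseChange_comp, this]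

end Equivariance

section Smoothness

variable {K V : Type} [Field K] [AddCommGroup V] [Module K V]
  {G : Type} [Group G] [TopologicalSpace G]

theorem isSmoothRep_iff_isLocallyConstant [ContinuousMul G] {ρ : G →* V →ₗ[K] V} :
    IsSmoothRep ρ ↔ ∀ v, IsLocallyConstant fun g => ρ g v := by
  refine ⟨fun h v => (IsLocallyConstant.iff_eventually_eq _).2 fun g₀ => ?_,
    fun h v => (h v).isOpen_fiber v⟩
  have hnhds : {g : G | ρ g v = v} ∈ nhds (g₀⁻¹ * g₀) := by
    rw [inv_mul_cancel]
    exact (h v).mem_nhds (by simp)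
  filter_upwards [(continuous_const_mul g₀⁻¹).continuousAt.preimage_mem_nhds hnhds] with g hg
  calc ρ g v = ρ g₀ (ρ (g₀⁻¹ * g) v) := by simp [← Module.End.mul_apply, ← map_mul]
    _ = ρ g₀ v := by rw [Set.mem_preimage.1 hg]

theorem IsSmoothRep.finite_orbit [ContinuousMul G] [CompactSpace G] {ρ : G →* V →ₗ[K] V}
    (hρ : IsSmoothRep ρ) (v : V) : (Set.range fun g => ρ g v).Finite :=
  (isSmoothRep_iff_isLocallyConstant.1 hρ v).range_finite

theorem IsSmoothRep.baseChange [ContinuousMul G] (k' : Type) [Field k'] [Algebra K k']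
    {ρ : G →* V →ₗ[K] V} (hρ : IsSmoothRep ρ) : IsSmoothRep (bcRep k' ρ) := by
  rw [isSmoothRep_iff_isLocallyConstant] at hρ ⊢
  intro x
  induction x using TensorProduct.induction_on with
  | zero =>
    simp only [map_zero]
    exact IsLocallyConstant.const 0
  | tmul c v =>
    simp only [bcRep_apply, LinearMap.baseChange_tmul]
    exact (hρ v).comp (c ⊗ₜ[K] ·)
  | add x y hx hy => simpa using hx.comp₂ hy (· + ·)

end Smoothness

section Invariance

variable {G : Type} [Group G]

def IsInvtSubmodule {K K' V : Type} [Semiring K] [Semiring K'] [AddCommMonoid V] [Module K V]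
    [Module K' V] (ρ : G →* V →ₗ[K'] V) (U : Submodule K V) : Prop :=
  ∀ g x, x ∈ U → ρ g x ∈ U

theorem isInvtSubmodule_span_orbit {K K' V : Type} [CommSemiring K] [Semiring K'] [Module K K']
    [AddCommMonoid V] [Module K V] [Module K' V] [IsScalarTower K K' V]
    (ρ : G →* V →ₗ[K'] V) (v : V) :
    IsInvtSubmodule ρ (Submodule.span K (Set.range fun g => ρ g v)) := by
  intro g x hx
  suffices Submodule.span K (Set.range fun g => ρ g v) ≤
      (Submodule.span K (Set.range fun g => ρ g v)).comap ((ρ g).restrictScalars K) from this hx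
  refine Submodule.span_le.2 ?_
  rintro _ ⟨h, rfl⟩
  exact Submodule.subset_span ⟨g * h, by simp⟩

theorem exists_minimal_isInvtSubmodule_le {K K' V : Type} [DivisionRing K] [Semiring K']
    [AddCommGroup V] [Module K V] [Module K' V] (ρ : G →* V →ₗ[K'] V) {N : Submodule K V}
    [FiniteDimensional K N] (hN : IsInvtSubmodule ρ N) (hN0 : N ≠ ⊥) :
    ∃ T ≤ N, Minimal (fun U => IsInvtSubmodule ρ U ∧ U ≠ ⊥) T := by
  obtain ⟨T, ⟨hTN, hT⟩, hmin⟩ := (measure fun U : Submodule K V => Module.finrank K U).wf.has_min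
    {U | U ≤ N ∧ IsInvtSubmodule ρ U ∧ U ≠ ⊥} ⟨N, le_rfl, hN, hN0⟩
  have : FiniteDimensional K T := Submodule.finiteDimensional_of_le hTN
  refine ⟨T, hTN, hT, fun U hU hUT => ?_⟩
  by_contra hTU
  exact hmin U ⟨hUT.trans hTN, hU⟩
    (Submodule.finrank_lt_finrank_of_lt (lt_of_le_not_ge hUT hTU))

theorem Minimal.map_isInvtSubmodule {K K₁ K₂ V W : Type} [Semiring K] [Semiring K₁]
    [Semiring K₂] [AddCommMonoid V] [Module K V] [Module K₁ V] [AddCommMonoid W] [Module K W]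
    [Module K₂ W]
    {ρV : G →* V →ₗ[K₁] V} {ρW : G →* W →ₗ[K₂] W} {f : V →ₗ[K] W}
    (hf : IsEquivariant ρV ρW f) {T : Submodule K V}
    (hT : Minimal (fun U => IsInvtSubmodule ρV U ∧ U ≠ ⊥) T) :
    T.map f = ⊥ ∨ Minimal (fun U => IsInvtSubmodule ρW U ∧ U ≠ ⊥) (T.map f) := by
  refine or_iff_not_imp_left.2 fun h0 => ⟨⟨?_, h0⟩, fun U ⟨hU, hU0⟩ hUT => ?_⟩
  · rintro g _ ⟨x, hx, rfl⟩
    exact ⟨ρV g x, hT.1.1 g x hx, hf g x⟩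
  · have hinv : IsInvtSubmodule ρV (T ⊓ U.comap f) := fun g x ⟨hxT, hxU⟩ =>
      ⟨hT.1.1 g x hxT, show f (ρV g x) ∈ U by rw [hf]; exact hU g _ hxU⟩
    have hne : T ⊓ U.comap f ≠ ⊥ := by
      obtain ⟨y, hyU, hy0⟩ := Submodule.exists_mem_ne_zero_of_ne_bot hU0
      obtain ⟨x, hxT, rfl⟩ := hUT hyU
      exact Submodule.ne_bot_iff _ |>.2 ⟨x, ⟨hxT, hyU⟩, fun hx => hy0 (by simp [hx])⟩
    exact Submodule.map_le_iff_le_comap.2 ((hT.2 ⟨hinv, hne⟩ inf_le_left).trans inf_le_right)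

end Invariance

section Contraction

variable {R A V W : Type*} [CommRing R] [Ring A] [Algebra R A]
  [AddCommGroup V] [Module R V] [AddCommGroup W] [Module R W]

noncomputable def contractCoeff (l : A →ₗ[R] R) : A ⊗[R] V →ₗ[R] V :=
  TensorProduct.lid R V ∘ₗ l.rTensor V

@[simp]
theorem contractCoeff_tmul (l : A →ₗ[R] R) (a : A) (v : V) :
    contractCoeff l (a ⊗ₜ[R] v) = l a • v := by
  simp [contractCoeff]

theorem contractCoeff_baseChange (l : A →ₗ[R] R) (f : V →ₗ[R] W) (x : A ⊗[R] V) :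
    contractCoeff l (f.baseChange A x) = f (contractCoeff l x) := by
  induction x using TensorProduct.induction_on with
  | zero => simp
  | tmul a v => simp
  | add x y hx hy => simp only [map_add, hx, hy]

theorem eq_zero_of_forall_contractCoeff_eq_zero [Module.Free R A] {x : A ⊗[R] V}
    (hx : ∀ l : A →ₗ[R] R, contractCoeff l x = 0) : x = 0 := by
  let b := Module.Free.chooseBasis R A
  have hcoord (y : A ⊗[R] V) (i) :
      TensorProduct.equivFinsuppOfBasisLeft b y i = contractCoeff (b.coord i) y := by
    induction y using TensorProduct.induction_on with
    | zero => simp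
    | tmul a v => simp
    | add y z hy hz => simp only [map_add, Finsupp.add_apply, hy, hz]
  exact (TensorProduct.equivFinsuppOfBasisLeft b).map_eq_zero_iff.1 <|
    Finsupp.ext fun i => by simp [hcoord, hx]

theorem mem_range_baseChange_of_forall_contractCoeff [Module.Free R A] {f : V →ₗ[R] W}
    {x : A ⊗[R] W} (hx : ∀ l : A →ₗ[R] R, contractCoeff l x ∈ LinearMap.range f) :
    x ∈ LinearMap.range (f.baseChange A) := by
  have hπ : f.range.mkQ.lTensor A x = 0 := eq_zero_of_forall_contractCoeff_eq_zero fun l => by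
    rw [← LinearMap.baseChange_eq_ltensor, contractCoeff_baseChange,
      Submodule.mkQ_apply, Submodule.Quotient.mk_eq_zero]
    exact hx l
  obtain ⟨y, rfl⟩ := (Module.Flat.lTensor_exact A (LinearMap.exact_map_mkQ_range f) x).1 hπ
  exact ⟨y, congrFun (LinearMap.baseChange_eq_ltensor f) y⟩

end Contraction

section Essential

variable {k : Type} [Field k] {G : Type} [Group G]
  {S I : Type} [AddCommGroup S] [Module k S] [AddCommGroup I] [Module k I]
  {ρS : G →* S →ₗ[k] S} {ρI : G →* I →ₗ[k] I} {ι : S →ₗ[k] I}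

theorem IsEssentialEmb.le_range_of_minimal (hι : IsEssentialEmb ρS ρI ι) {W : Submodule k I}
    (hW : Minimal (fun U => IsInvtSubmodule ρI U ∧ U ≠ ⊥) W) : W ≤ LinearMap.range ι := by
  obtain ⟨x, hxW, hx0, hxι⟩ := hι.2.2 W hW.1.1 hW.1.2
  have hinv : IsInvtSubmodule ρI (W ⊓ LinearMap.range ι) := by
    rintro g _ ⟨hyW, s, rfl⟩
    exact ⟨hW.1.1 g _ hyW, ρS g s, hι.2.1 g s⟩
  have hne : W ⊓ LinearMap.range ι ≠ ⊥ := Submodule.ne_bot_iff _ |>.2 ⟨x, ⟨hxW, hxι⟩, hx0⟩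
  exact (hW.2 ⟨hinv, hne⟩ inf_le_left).trans inf_le_right

theorem IsEssentialEmb.injective_of_injective_comp (hι : IsEssentialEmb ρS ρI ι) {J : Type}
    [AddCommGroup J] [Module k J] {ρJ : G →* J →ₗ[k] J} {φ : I →ₗ[k] J}
    (hφ : IsEquivariant ρI ρJ φ) (hφι : Function.Injective (φ ∘ₗ ι)) : Function.Injective φ := by
  rw [← LinearMap.ker_eq_bot]
  by_contra hker
  have hinv : IsInvtSubmodule ρI (LinearMap.ker φ) := fun g x hx => by
    rw [LinearMap.mem_ker] at hx ⊢
    rw [hφ, hx, map_zero]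
  obtain ⟨_, hx, hx0, s, rfl⟩ := hι.2.2 _ hinv hker
  have hs : s = 0 := hφι (by simpa using hx)
  exact hx0 (by rw [hs, map_zero])

variable (k' : Type) [Field k'] [Algebra k k']

theorem IsEssentialEmb.le_range_baseChange_of_minimal (hι : IsEssentialEmb ρS ρI ι)
    {T : Submodule k (k' ⊗[k] I)}
    (hT : Minimal (fun U => IsInvtSubmodule (bcRep k' ρI) U ∧ U ≠ ⊥) T) :
    T ≤ (LinearMap.range (ι.baseChange k')).restrictScalars k := by
  intro x hx
  refine mem_range_baseChange_of_forall_contractCoeff fun l => ?_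
  have hl : IsEquivariant (bcRep k' ρI) ρI (contractCoeff l) := fun g y =>
    contractCoeff_baseChange l (ρI g) y
  rcases hT.map_isInvtSubmodule hl with h0 | hmin
  · have : contractCoeff l x = 0 := by
      simpa [h0] using Submodule.mem_map_of_mem (f := contractCoeff l) hx
    simp [this]
  · exact hι.le_range_of_minimal hmin (Submodule.mem_map_of_mem hx)

theorem IsEssentialEmb.baseChange [TopologicalSpace G] [ContinuousMul G] [CompactSpace G]
    (hsmI : IsSmoothRep ρI) (hι : IsEssentialEmb ρS ρI ι) :
    IsEssentialEmb (bcRep k' ρS) (bcRep k' ρI) (ι.baseChange k') := by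
  refine ⟨?_, IsEquivariant.baseChange k' hι.2.1, fun U hU hU0 => ?_⟩
  · rw [LinearMap.baseChange_eq_ltensor]
    exact Module.Flat.lTensor_preserves_injective_linearMap ι hι.1
  obtain ⟨u, huU, hu0⟩ := Submodule.exists_mem_ne_zero_of_ne_bot hU0
  set N := Submodule.span k (Set.range fun g => bcRep k' ρI g u)
  have : FiniteDimensional k N :=
    FiniteDimensional.span_of_finite k ((hsmI.baseChange k').finite_orbit u)
  have huN : u ∈ N := Submodule.subset_span ⟨1, by simp⟩
  have hNU : N ≤ U.restrictScalars k := Submodule.span_le.2 <| by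
    rintro _ ⟨g, rfl⟩
    exact hU g u huU
  obtain ⟨T, hTN, hT⟩ := exists_minimal_isInvtSubmodule_le (bcRep k' ρI)
    (isInvtSubmodule_span_orbit (bcRep k' ρI) u) (Submodule.ne_bot_iff _ |>.2 ⟨u, huN, hu0⟩)
  obtain ⟨t, htT, ht0⟩ := Submodule.exists_mem_ne_zero_of_ne_bot hT.1.2
  exact ⟨t, hNU (hTN htT), ht0, hι.le_range_baseChange_of_minimal k' hT htT⟩

end Essential

section RegularRep

variable (G : Type) [Group G] [TopologicalSpace G] [ContinuousMul G]

def rightRegRep (K M : Type) [Semiring K] [AddCommMonoid M] [Module K M] :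
    G →* LocallyConstant G M →ₗ[K] LocallyConstant G M where
  toFun g := LocallyConstant.comapₗ K ⟨(· * g), continuous_mul_const g⟩
  map_one' := by ext; simp
  map_mul' g h := by ext; simp [mul_assoc]

@[simp]
theorem rightRegRep_apply (K M : Type) [Semiring K] [AddCommMonoid M] [Module K M] (g : G)
    (f : LocallyConstant G M) (x : G) : rightRegRep G K M g f x = f (x * g) :=
  rfl

/-- By the tube lemma, a locally constant function on a compact group is uniformly so. -/
theorem isSmoothRep_rightRegRep [CompactSpace G] (K M : Type) [Field K] [AddCommGroup M]
    [Module K M] : IsSmoothRep (rightRegRep G K M) := by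
  refine isSmoothRep_iff_isLocallyConstant.2 fun f =>
    (IsLocallyConstant.iff_eventually_eq _).2 fun g₀ => ?_
  have hf : IsLocallyConstant fun z : G × G => f (z.2 * z.1) :=
    f.isLocallyConstant.comp_continuous (continuous_snd.mul continuous_fst)
  have hf₀ : IsLocallyConstant fun z : G × G => f (z.2 * g₀) :=
    f.isLocallyConstant.comp_continuous ((continuous_mul_const g₀).comp continuous_snd)
  have hnear (x : G) : ∀ᶠ z : G × G in nhds (g₀, x), f (z.2 * z.1) = f (z.2 * g₀) :=
    ((hf.eventually_eq _).and (hf₀.eventually_eq _)).mono fun _ h => h.1.trans h.2.symm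
  filter_upwards [isCompact_univ.eventually_forall_of_forall_eventually
    (P := fun g x => f (x * g) = f (x * g₀)) fun x _ => hnear x] with g hg
  ext x
  exact hg x trivial

variable {G}

def coeffMap {K V M : Type} [Field K] [AddCommGroup V] [Module K V] [AddCommMonoid M]
    [Module K M] {ρ : G →* V →ₗ[K] V} (hρ : IsSmoothRep ρ) (φ : V →ₗ[K] M) :
    V →ₗ[K] LocallyConstant G M where
  toFun v := ⟨fun g => φ (ρ g v), (isSmoothRep_iff_isLocallyConstant.1 hρ v).comp φ⟩
  map_add' v w := by ext; simp
  map_smul' c v := by ext; simp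

@[simp]
theorem coeffMap_apply {K V M : Type} [Field K] [AddCommGroup V] [Module K V] [AddCommMonoid M]
    [Module K M] {ρ : G →* V →ₗ[K] V} (hρ : IsSmoothRep ρ) (φ : V →ₗ[K] M) (v : V) (g : G) :
    coeffMap hρ φ v g = φ (ρ g v) :=
  rfl

theorem isEquivariant_coeffMap {K V M : Type} [Field K] [AddCommGroup V] [Module K V]
    [AddCommMonoid M] [Module K M] {ρ : G →* V →ₗ[K] V} (hρ : IsSmoothRep ρ)
    (φ : V →ₗ[K] M) : IsEquivariant ρ (rightRegRep G K M) (coeffMap hρ φ) := fun g v => by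
  ext x
  simp

variable (G) in
/-- Frobenius reciprocity: `f` extends as the coefficient map of `f(-)(1) ∘ σ`, where `σ` is
a linear left inverse of the embedding. -/
theorem isInjObjRel_rightRegRep (K M : Type) [Field K] [AddCommGroup M] [Module K M] :
    IsInjObjRel (rightRegRep G K M) := by
  intro U W _ _ _ _ ρU ρW _ hW ι hι hιeq f hf
  obtain ⟨σ, hσ⟩ := ι.exists_leftInverse_of_injective (LinearMap.ker_eq_bot.2 hι)
  have hσι (u : U) : σ (ι u) = u := LinearMap.congr_fun hσ u
  refine ⟨coeffMap hW (LocallyConstant.evalₗ K 1 ∘ₗ f ∘ₗ σ), isEquivariant_coeffMap hW _,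
    fun u => ?_⟩
  ext x
  simp [← hιeq, hσι, hf]

end RegularRep

theorem IsInjObjRel.of_retract {k : Type} [Field k] {G : Type} [Group G] [TopologicalSpace G]
    {J J' : Type} [AddCommGroup J] [Module k J] [AddCommGroup J'] [Module k J']
    {ρJ : G →* J →ₗ[k] J} {ρJ' : G →* J' →ₗ[k] J'} (hJ : IsInjObjRel ρJ) {i : J' →ₗ[k] J}
    {r : J →ₗ[k] J'} (hi : IsEquivariant ρJ' ρJ i) (hr : IsEquivariant ρJ ρJ' r)
    (hri : ∀ x, r (i x) = x) : IsInjObjRel ρJ' := by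
  intro U W _ _ _ _ ρU ρW hU hW ι hι hιeq f hf
  obtain ⟨h, hh, hhι⟩ := hJ U W _ _ _ _ ρU ρW hU hW ι hι hιeq (i ∘ₗ f)
    fun g u => by simp [hf, hi g]
  exact ⟨r ∘ₗ h, fun g w => by simp [hh, hr g], fun u => by simp [hhι, hri]⟩

instance LocallyConstant.isScalarTower {X R S Y : Type*} [TopologicalSpace X] [SMul R S]
    [SMul R Y] [SMul S Y] [IsScalarTower R S Y] : IsScalarTower R S (LocallyConstant X Y) :=
  ⟨fun _ _ _ => LocallyConstant.ext fun _ => smul_assoc _ _ _⟩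

section BaseChangeLocallyConstant

variable {k : Type} [Field k] (k' : Type) [Field k'] [Algebra k k'] (G : Type)
  [TopologicalSpace G] (M : Type) [AddCommGroup M] [Module k M]

noncomputable def lcBaseChange : k' ⊗[k] LocallyConstant G M →ₗ[k'] LocallyConstant G (k' ⊗[k] M) :=
  (LocallyConstant.mapₗ k (TensorProduct.mk k k' M 1)).liftBaseChange k'

variable {k' G M}

@[simp]
theorem lcBaseChange_tmul (c : k') (f : LocallyConstant G M) (x : G) :
    lcBaseChange k' G M (c ⊗ₜ[k] f) x = c ⊗ₜ f x := by
  simp [lcBaseChange, TensorProduct.smul_tmul']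

theorem contractCoeff_lcBaseChange (l : k' →ₗ[k] k) (y : k' ⊗[k] LocallyConstant G M) (x : G) :
    contractCoeff l (lcBaseChange k' G M y x) = contractCoeff l y x := by
  induction y using TensorProduct.induction_on with
  | zero => simp
  | tmul c f => simp
  | add y z hy hz => simp [hy, hz]

theorem lcBaseChange_injective : Function.Injective (lcBaseChange (k := k) k' G M) := by
  refine (injective_iff_map_eq_zero _).2 fun y hy =>
    eq_zero_of_forall_contractCoeff_eq_zero fun l => LocallyConstant.ext fun x => ?_
  rw [← contractCoeff_lcBaseChange, hy]
  simp

/-- On a compact space a locally constant `F` has finite range, so it is the finite sum of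
the functions `χ • v` with `χ` the indicator of a fibre `F⁻¹ v`. -/
theorem lcBaseChange_surjective [CompactSpace G] :
    Function.Surjective (lcBaseChange (k := k) k' G M) := by
  classical
  have hsmul (χ : LocallyConstant G k) (v : k' ⊗[k] M) :
      χ.map (· • v) ∈ LinearMap.range (lcBaseChange k' G M) := by
    induction v using TensorProduct.induction_on with
    | zero =>
      convert zero_mem (LinearMap.range (lcBaseChange k' G M))
      ext
      simp
    | tmul c m => exact ⟨c ⊗ₜ χ.map (· • m), by ext x; simp⟩
    | add v w hv hw =>
      convert add_mem hv hw using 1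
      ext x
      simp [smul_add]
  intro F
  have hF : ∑ v ∈ F.range_finite.toFinset,
      (F.map fun w => if w = v then (1 : k) else 0).map (· • v) = F := by
    ext x
    conv_lhs => rw [← LocallyConstant.coeFnAddMonoidHom_apply, map_sum, Finset.sum_apply]
    simp
  refine LinearMap.mem_range.1 ?_
  rw [← hF]
  exact sum_mem fun v _ => hsmul _ v

variable (k' G M) in
noncomputable def lcBaseChangeEquiv [CompactSpace G] :
    k' ⊗[k] LocallyConstant G M ≃ₗ[k'] LocallyConstant G (k' ⊗[k] M) :=
  LinearEquiv.ofBijective _ ⟨lcBaseChange_injective, lcBaseChange_surjective⟩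

theorem isEquivariant_lcBaseChange [Group G] [ContinuousMul G] :
    IsEquivariant (bcRep k' (rightRegRep G k M)) (rightRegRep G k' (k' ⊗[k] M))
      (lcBaseChange k' G M) := by
  intro g y
  induction y using TensorProduct.induction_on with
  | zero => simp
  | tmul c f => ext x; simp
  | add y z hy hz => simp only [map_add, hy, hz]

end BaseChangeLocallyConstant

theorem IsInjEnvelopeRep.isInjObjRel_bcRep {k : Type} [Field k] (k' : Type) [Field k']
    [Algebra k k'] {G : Type} [Group G] [TopologicalSpace G] [ContinuousMul G] [CompactSpace G]
    {S I : Type} [AddCommGroup S] [Module k S] [AddCommGroup I] [Module k I]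
    {ρS : G →* S →ₗ[k] S} {ρI : G →* I →ₗ[k] I} {ι : S →ₗ[k] I} (hsmI : IsSmoothRep ρI)
    (henv : IsInjEnvelopeRep ρS ρI ι) : IsInjObjRel (bcRep k' ρI) := by
  obtain ⟨σ, hσ⟩ := ι.exists_leftInverse_of_injective (LinearMap.ker_eq_bot.2 henv.2.1)
  have hj : Function.Injective (coeffMap hsmI σ) :=
    henv.2.injective_of_injective_comp (isEquivariant_coeffMap hsmI σ) fun s t hst => by
      simpa [← LinearMap.comp_apply σ ι, hσ] using congr($hst 1)
  obtain ⟨r, hr, hrj⟩ := henv.1 I (LocallyConstant G S) _ _ _ _ ρI (rightRegRep G k S) hsmI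
    (isSmoothRep_rightRegRep G k S) _ hj (isEquivariant_coeffMap hsmI σ) LinearMap.id
    fun _ _ => rfl
  have hrj' : r ∘ₗ coeffMap hsmI σ = LinearMap.id := LinearMap.ext hrj
  let e := lcBaseChangeEquiv (k := k) k' G S
  have he : IsEquivariant (bcRep k' (rightRegRep G k S)) (rightRegRep G k' (k' ⊗[k] S)) e :=
    isEquivariant_lcBaseChange
  refine (isInjObjRel_rightRegRep G k' (k' ⊗[k] S)).of_retract
    (i := e.toLinearMap ∘ₗ (coeffMap hsmI σ).baseChange k')
    (r := r.baseChange k' ∘ₗ e.symm.toLinearMap)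
    (he.comp ((isEquivariant_coeffMap hsmI σ).baseChange k'))
    ((IsEquivariant.baseChange k' hr).comp he.symm) fun x => ?_
  simp [← LinearMap.comp_apply (r.baseChange k'), ← LinearMap.baseChange_comp, hrj']

theorem baseChange_injective_envelope_general
    (k : Type) [Field k]
    (k' : Type) [Field k'] [Algebra k k']
    (G : Type) [Group G] [TopologicalSpace G] [IsTopologicalGroup G]
    [CompactSpace G]
    (S I : Type) [AddCommGroup S] [Module k S] [AddCommGroup I] [Module k I]
    (ρS : G →* S →ₗ[k] S) (ρI : G →* I →ₗ[k] I)
    (hsmS : IsSmoothRep ρS) (hsmI : IsSmoothRep ρI)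
    (ι : S →ₗ[k] I) (henv : IsInjEnvelopeRep ρS ρI ι) :
    IsSmoothRep (bcRep k' ρS) ∧ IsSmoothRep (bcRep k' ρI) ∧
    IsInjEnvelopeRep (bcRep k' ρS) (bcRep k' ρI) (ι.baseChange k') :=
  ⟨hsmS.baseChange k', hsmI.baseChange k', henv.isInjObjRel_bcRep k' hsmI,
    henv.2.baseChange k' hsmI⟩

/-- Let `𝒢` be a profinite group with an open pro-p subgroup and `k` a
finite field such that every irreducible smooth `k`-representation of `𝒢` is absolutely
irreducible.  If `S` is an irreducible smooth `k`-representation and `ι : S ↪ I_S` an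
injective envelope in smooth `k`-representations, then for any field extension `k'` of
`k`, the base change `ι ⊗ k' : S ⊗_k k' ↪ I_S ⊗_k k'` is an injective envelope in the
category of smooth `k'`-representations of `𝒢`. -/
theorem baseChange_injective_envelope
    (p : ℕ) [Fact p.Prime] (k : Type) [Field k] [Fintype k]
    (k' : Type) [Field k'] [Algebra k k']
    (G : Type) [Group G] [TopologicalSpace G] [IsTopologicalGroup G]
    [CompactSpace G] [TotallyDisconnectedSpace G] [T2Space G]
    (hP : ∃ P : Subgroup G, IsOpen (P : Set G) ∧ IsProP p P)
    -- every irreducible smooth `k`-representation of `𝒢` is absolutely irreducible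
    (habs : ∀ (T : Type) (_ : AddCommGroup T) (_ : Module k T)
      (ρT : G →* T →ₗ[k] T), IsSmoothRep ρT → IsIrrRep ρT →
      ∀ (k'' : Type) (_ : Field k'') (_ : Algebra k k''), IsIrrRep (bcRep k'' ρT))
    (S I : Type) [AddCommGroup S] [Module k S] [AddCommGroup I] [Module k I]
    (ρS : G →* S →ₗ[k] S) (ρI : G →* I →ₗ[k] I)
    (hsmS : IsSmoothRep ρS) (hsmI : IsSmoothRep ρI) (hirr : IsIrrRep ρS)
    (ι : S →ₗ[k] I) (henv : IsInjEnvelopeRep ρS ρI ι) :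
    IsSmoothRep (bcRep k' ρS) ∧ IsSmoothRep (bcRep k' ρI) ∧
    IsInjEnvelopeRep (bcRep k' ρS) (bcRep k' ρI) (ι.baseChange k') :=
  baseChange_injective_envelope_general k k' G S I ρS ρI hsmS hsmI ι henv
end

section
/- Let L be a finite extension of ℚ_p with ring of integers A, uniformizer ϖ_L and residue field k. Let M be a torsion-free compact linearly topological A-module (so M ≅ ∏_{i∈I} A for some set I). Then the natural map Hom_A^{cont}(M, A) ⊗_A k → Hom_A^{cont}(M, k) is an isomorphism of A-modules; equivalently, every continuous A-linear map M → k lifts to a continuous A-linear map M → A. -/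
/-! An open kernel in the product topology contains a basic neighbourhood of `0`, which
constrains only the coordinates in some finite `S ⊆ I`. Hence `φ x = ∑_{j ∈ S} x_j φ(e_j)`,
and lifting the finitely many values `φ(e_j)` to `A` gives a continuous lift. -/

namespace LinearMap

variable {R M N I : Type*} [Semiring R] [TopologicalSpace R]
  [AddCommMonoid M] [Module R M] [AddCommMonoid N] [Module R N]

theorem exists_finset_apply_eq_sum_of_isOpen_ker [DecidableEq I] (f : (I → R) →ₗ[R] M)
    (hf : IsOpen {x | f x = 0}) :
    ∃ S : Finset I, ∀ x, f x = ∑ j ∈ S, x j • f (Pi.single j 1) := by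
  obtain ⟨S, u, hu, hSu⟩ := isOpen_pi_iff.mp hf 0 (map_zero f)
  refine ⟨S, fun x => ?_⟩
  set tail : I → R := fun i => if i ∈ S then 0 else x i
  have htail : f tail = 0 :=
    hSu fun i hi => by simpa [tail, Finset.mem_coe.mp hi] using (hu i hi).2
  have hx : x = ∑ j ∈ S, Pi.single j (x j) + tail := by
    ext i
    by_cases hi : i ∈ S <;> simp [tail, Finset.sum_pi_single, hi]
  calc f x = ∑ j ∈ S, f (Pi.single j (x j)) := by
        rw [congrArg f hx, map_add, htail, add_zero, map_sum]
    _ = ∑ j ∈ S, x j • f (Pi.single j 1) := Finset.sum_congr rfl fun j _ => by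
        rw [← map_smul, ← Pi.single_smul', smul_eq_mul, mul_one]

variable [TopologicalSpace N] [ContinuousAdd N] [ContinuousSMul R N]

theorem exists_continuous_lift_of_isOpen_ker (π : N →ₗ[R] M) (hπ : Function.Surjective π)
    (f : (I → R) →ₗ[R] M) (hf : IsOpen {x | f x = 0}) :
    ∃ g : (I → R) →ₗ[R] N, Continuous g ∧ π ∘ₗ g = f := by
  classical
  obtain ⟨S, hS⟩ := f.exists_finset_apply_eq_sum_of_isOpen_ker hf
  choose n hn using fun j : I => hπ (f (Pi.single j 1))
  let g : (I → R) →ₗ[R] N := ∑ j ∈ S, (proj (R := R) j).smulRight (n j)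
  have hg : ⇑g = fun x : I → R => ∑ j ∈ S, x j • n j := by
    ext; simp [g]
  refine ⟨g, ?_, ?_⟩
  · rw [hg]
    fun_prop
  · ext1 x
    simp [hg, hS x, hn]

end LinearMap

theorem continuous_dual_lifts_general
    (A : Type) [CommRing A] [IsDomain A] [IsDiscreteValuationRing A]
    [TopologicalSpace A] [IsTopologicalRing A]
    (I : Type)
    (φ : (I → A) →ₗ[A] IsLocalRing.ResidueField A)
    (hφ : IsOpen {x : I → A | φ x = 0}) :
    ∃ ψ : (I → A) →ₗ[A] A, Continuous ψ ∧
      ∀ x : I → A, IsLocalRing.residue A (ψ x) = φ x := by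
  obtain ⟨ψ, hψ, hlift⟩ := (Algebra.linearMap A _).exists_continuous_lift_of_isOpen_ker
    IsLocalRing.residue_surjective φ hφ
  exact ⟨ψ, hψ, LinearMap.congr_fun hlift⟩

/-- Let `A` be the ring of integers of a finite extension `L` of `ℚ_p`
(a complete discrete valuation ring with finite residue field `k`, endowed with its
`𝔪`-adic topology), and let `M ≅ ∏_{i ∈ I} A` be a torsion-free compact linearly
topological `A`-module, realized as a product `I → A` with the product topology.
Then every continuous `A`-linear map `M → k` (with `k` discrete, i.e. with open
kernel) lifts to a continuous `A`-linear map `M → A`; equivalently the natural map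
`Hom_A^{cont}(M, A) ⊗_A k → Hom_A^{cont}(M, k)` is an isomorphism. -/
theorem continuous_dual_lifts
    (A : Type) [CommRing A] [IsDomain A] [IsDiscreteValuationRing A]
    [TopologicalSpace A] [IsTopologicalRing A]
    (hadic : IsAdic (IsLocalRing.maximalIdeal A))
    [IsAdicComplete (IsLocalRing.maximalIdeal A) A]
    [Finite (IsLocalRing.ResidueField A)]
    (I : Type)
    (φ : (I → A) →ₗ[A] IsLocalRing.ResidueField A)
    (hφ : IsOpen {x : I → A | φ x = 0}) :
    ∃ ψ : (I → A) →ₗ[A] A, Continuous ψ ∧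
      ∀ x : I → A, IsLocalRing.residue A (ψ x) = φ x :=
  continuous_dual_lifts_general A I φ hφ
end

section
/- Let F be a finite extension of ℚ_p, G := GL₂(F), L a finite extension of ℚ_p, and V an absolutely irreducible finite-dimensional L-linear representation of G (continuous, or abstract). If G stabilizes an A-lattice in V, where A is the ring of integers of L, then dim_L V = 1, i.e. V is a character. -/
/-!
Since `F` has characteristic zero, every transvection in `GL₂(F)` has `N`-th roots for all
`N > 0`. The stable lattice `Λ` is a finitely generated `ℤ_p`-module, so the quotients
`Λ / pⁿΛ` are finite and `⋂ pⁿΛ = 0` (Krull). An element with roots of every order acts trivially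
on each finite quotient, hence on `Λ`, hence on `V = L · Λ`. So `ρ` kills all transvections, and
as `GL₂(F)` is generated by transvections and diagonal matrices, the image of `ρ` is commutative.
Over an algebraic closure commuting operators preserve each other's eigenspaces, so by
irreducibility each acts by a scalar; then every line is invariant, and `dim V = 1`.
-/

open scoped TensorProduct
open Matrix

theorem MonoidHom.map_eq_one_of_forall_exists_pow_eq {G H : Type*} [Group G] [Monoid H]
    [Finite H] (φ : G →* H) {g : G} (hg : ∀ N : ℕ, 0 < N → ∃ h : G, h ^ N = g) : φ g = 1 := by
  obtain ⟨h, rfl⟩ := hg (Nat.card Hˣ) Nat.card_pos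
  rw [map_pow, ← φ.coe_toHomUnits, ← Units.val_pow_eq_pow_val, pow_card_eq_one', Units.val_one]

section Reduction

variable {R M : Type*} [CommRing R] [AddCommGroup M] [Module R M]

noncomputable def Module.End.reduceModIdeal (I : Ideal R) :
    Module.End R M →* Module.End R (M ⧸ (I • ⊤ : Submodule R M)) where
  toFun f := Submodule.mapQ _ _ f (Submodule.smul_top_le_comap_smul_top I f)
  map_one' := Submodule.mapQ_id _
  map_mul' f g := Submodule.mapQ_comp _ _ _ g f _ _

theorem Module.End.map_eq_one_of_forall_exists_pow_eq {G : Type*} [Group G] (I : Ideal R)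
    (hsep : ⨅ n : ℕ, (I ^ n • ⊤ : Submodule R M) = ⊥)
    (hfin : ∀ n : ℕ, Finite (M ⧸ (I ^ n • ⊤ : Submodule R M)))
    (φ : G →* Module.End R M) {g : G} (hg : ∀ N : ℕ, 0 < N → ∃ h : G, h ^ N = g) :
    φ g = 1 := by
  have hcong : ∀ n (m : M), φ g m - m ∈ (I ^ n • ⊤ : Submodule R M) := by
    intro n m
    have : Finite (Module.End R (M ⧸ (I ^ n • ⊤ : Submodule R M))) :=
      _root_.Finite.of_injective _ DFunLike.coe_injective
    have h1 := ((Module.End.reduceModIdeal (I ^ n)).comp φ).map_eq_one_of_forall_exists_pow_eq hg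
    exact (Submodule.Quotient.eq _).mp (LinearMap.congr_fun h1 (Submodule.Quotient.mk m))
  ext m
  have hm : φ g m - m ∈ (⨅ n : ℕ, (I ^ n • ⊤ : Submodule R M)) :=
    Submodule.mem_iInf _ |>.mpr fun n => hcong n m
  simpa [hsep, sub_eq_zero] using hm

end Reduction

theorem Submodule.span_int_pow_smul_top_eq_restrictScalars (R M : Type*) [CommRing R]
    [AddCommGroup M] [Module R M] (k : ℤ) (n : ℕ) :
    (Ideal.span {k} ^ n • ⊤ : Submodule ℤ M) =
      (Ideal.span {(k : R)} ^ n • ⊤ : Submodule R M).restrictScalars ℤ := by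
  ext x
  simp [Ideal.span_singleton_pow, Submodule.ideal_span_singleton_smul,
    Submodule.mem_smul_pointwise_iff_exists, ← Int.cast_smul_eq_zsmul R]

theorem Module.End.map_eq_one_of_forall_exists_pow_eq_of_isLocalRing {R M G : Type*}
    [CommRing R] [IsNoetherianRing R] [IsLocalRing R] [AddCommGroup M] [Module R M]
    [Module.Finite R M] [Group G] (k : ℤ) (hk : ¬IsUnit (k : R)) [Finite (R ⧸ Ideal.span {(k : R)})]
    (φ : G →* Module.End ℤ M) {g : G} (hg : ∀ N : ℕ, 0 < N → ∃ h : G, h ^ N = g) :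
    φ g = 1 := by
  refine Module.End.map_eq_one_of_forall_exists_pow_eq (Ideal.span {k}) ?_ (fun n => ?_) φ hg
  · simp_rw [Submodule.span_int_pow_smul_top_eq_restrictScalars R M,
      ← Submodule.restrictScalars_iInf,
      Ideal.iInf_pow_smul_eq_bot_of_isLocalRing _ (Ideal.span_singleton_ne_top hk),
      Submodule.restrictScalars_bot]
  · rw [Submodule.span_int_pow_smul_top_eq_restrictScalars R M]
    have := Ideal.finite_quotient_pow (IsNoetherian.noetherian (Ideal.span {(k : R)})) n
    have := Submodule.finite_quotient_smul (Ideal.span {(k : R)} ^ n)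
      (Module.Finite.fg_top (R := R) (M := M))
    exact .of_equiv _ (Submodule.Quotient.restrictScalarsEquiv ℤ _).symm.toEquiv

theorem Matrix.SpecialLinearGroup.transvection_pow {ι F : Type*} [DecidableEq ι] [Fintype ι]
    [CommRing F] {i j : ι} (hij : i ≠ j) (b : F) (N : ℕ) :
    transvection hij b ^ N = transvection hij (N * b) := by
  induction N with
  | zero => simp
  | succ N ih => rw [pow_succ, ih, ← transvection_add]; push_cast; ring_nf

theorem Matrix.TransvectionStruct.exists_pow_eq_toSpecialLinearGroup {n F : Type*} [Fintype n]
    [DecidableEq n] [Field F] [CharZero F] (t : TransvectionStruct n F) {N : ℕ} (hN : 0 < N) :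
    ∃ s : SpecialLinearGroup n F, s ^ N = t.toSpecialLinearGroup := by
  refine ⟨SpecialLinearGroup.transvection t.hij (t.c / N), ?_⟩
  rw [SpecialLinearGroup.transvection_pow, mul_div_cancel₀ _ (Nat.cast_ne_zero.mpr hN.ne')]
  rfl

namespace Matrix.GeneralLinearGroup

variable {n F M : Type*} [Fintype n] [DecidableEq n] [Field F] [Monoid M]

theorem exists_diagonal_map_eq (φ : GL n F →* M)
    (hφ : ∀ t : TransvectionStruct n F, φ t.toSpecialLinearGroup = 1) (g : GL n F) :
    ∃ (u : GL n F) (d : n → F), (u : Matrix n n F) = diagonal d ∧ φ g = φ u := by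
  obtain ⟨Ls, Ls', d, hg⟩ :=
    Pivot.exists_list_transvec_mul_diagonal_mul_list_transvec (g : Matrix n n F)
  let prodGL (l : List (TransvectionStruct n F)) : GL n F :=
    (l.map fun t => (t.toSpecialLinearGroup : GL n F)).prod
  have hval (l : List (TransvectionStruct n F)) :
      (prodGL l : Matrix n n F) = (l.map TransvectionStruct.toMatrix).prod := by
    simp only [prodGL, ← Units.coeHom_apply, map_list_prod, List.map_map]
    rfl
  have hφ1 (l : List (TransvectionStruct n F)) : φ (prodGL l) = 1 := by
    simp only [prodGL, map_list_prod, List.map_map]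
    exact List.prod_eq_one fun x hx => by
      obtain ⟨t, -, rfl⟩ := List.mem_map.mp hx
      exact hφ t
  refine ⟨(prodGL Ls)⁻¹ * g * (prodGL Ls')⁻¹, d, ?_, ?_⟩
  · rw [Units.val_mul, Units.val_mul, hg, ← hval, ← hval]
    simp [← mul_assoc]
  · conv_lhs =>
      rw [show g = prodGL Ls * ((prodGL Ls)⁻¹ * g * (prodGL Ls')⁻¹) * prodGL Ls' by group]
    rw [map_mul, map_mul, hφ1, hφ1, one_mul, mul_one]

theorem commute_map_of_map_transvection_eq_one (φ : GL n F →* M)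
    (hφ : ∀ t : TransvectionStruct n F, φ t.toSpecialLinearGroup = 1) (g h : GL n F) :
    Commute (φ g) (φ h) := by
  obtain ⟨u, d, hu, hgu⟩ := exists_diagonal_map_eq φ hφ g
  obtain ⟨w, e, hw, hhw⟩ := exists_diagonal_map_eq φ hφ h
  have huw : Commute u w := Units.ext <| by
    simp only [Units.val_mul, hu, hw, diagonal_mul_diagonal, mul_comm]
  rw [hgu, hhw]
  exact huw.map φ

end Matrix.GeneralLinearGroup

section Schur

variable {K W ι : Type*} [Field K] [IsAlgClosed K] [AddCommGroup W] [Module K W]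
  [FiniteDimensional K W] [Nontrivial W]

theorem Module.End.exists_forall_apply_eq_smul_of_commute (f : ι → Module.End K W)
    (hcomm : ∀ i j, Commute (f i) (f j))
    (hirr : ∀ U : Submodule K W, (∀ i x, x ∈ U → f i x ∈ U) → U = ⊥ ∨ U = ⊤) (i : ι) :
    ∃ μ : K, ∀ x, f i x = μ • x := by
  obtain ⟨μ, hμ⟩ := Module.End.exists_eigenvalue (f i)
  refine ⟨μ, fun x => Module.End.mem_eigenspace_iff.mp ?_⟩
  rcases hirr _ fun j => Module.End.mapsTo_genEigenspace_of_comm (hcomm i j) μ 1 with h | h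
  · exact absurd h hμ
  · exact Submodule.eq_top_iff'.mp h x

theorem Module.End.finrank_eq_one_of_commute (f : ι → Module.End K W)
    (hcomm : ∀ i j, Commute (f i) (f j))
    (hirr : ∀ U : Submodule K W, (∀ i x, x ∈ U → f i x ∈ U) → U = ⊥ ∨ U = ⊤) :
    Module.finrank K W = 1 := by
  obtain ⟨w, hw⟩ := exists_ne (0 : W)
  have hinv : ∀ i x, x ∈ K ∙ w → f i x ∈ K ∙ w := fun i x hx => by
    obtain ⟨μ, hμ⟩ := exists_forall_apply_eq_smul_of_commute f hcomm hirr i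
    exact hμ x ▸ Submodule.smul_mem _ μ hx
  rcases hirr _ hinv with h | h
  · exact absurd (Submodule.span_singleton_eq_bot.mp h) hw
  · rw [← finrank_top, ← h, finrank_span_singleton hw]

end Schur

theorem PadicInt.finite_quotient_span_p (p : ℕ) [Fact p.Prime] :
    Finite (ℤ_[p] ⧸ Ideal.span {(p : ℤ_[p])}) := by
  rw [← PadicInt.maximalIdeal_eq_span_p]
  exact .of_equiv _ (PadicInt.residueField (p := p)).symm.toEquiv

theorem map_eq_one_of_forall_exists_pow_eq_of_stable_lattice (p : ℕ) [Fact p.Prime]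
    {A L V G : Type*} [CommRing A] [Algebra ℤ_[p] A] [Module.Finite ℤ_[p] A] [Semiring L]
    [AddCommGroup V] [Module L V] [Module A V] [Group G] (ρ : G →* Module.End L V)
    (Λ : Submodule A V) (hfg : Λ.FG) (hspan : Submodule.span L (Λ : Set V) = ⊤)
    (hstab : ∀ g : G, ∀ v ∈ Λ, ρ g v ∈ Λ) {g : G}
    (hg : ∀ N : ℕ, 0 < N → ∃ h : G, h ^ N = g) : ρ g = 1 := by
  let : Module ℤ_[p] Λ := Module.compHom Λ (algebraMap ℤ_[p] A)
  have : IsScalarTower ℤ_[p] A Λ := ⟨fun r a x => by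
    show (r • a) • x = algebraMap ℤ_[p] A r • a • x
    rw [Algebra.smul_def, mul_smul]⟩
  have : Module.Finite A Λ := Module.Finite.iff_fg.mpr hfg
  have : Module.Finite ℤ_[p] Λ := .trans A Λ
  have : Finite (ℤ_[p] ⧸ Ideal.span {((p : ℤ) : ℤ_[p])}) := by
    simpa using PadicInt.finite_quotient_span_p p
  -- `ρ g` is merely additive on `Λ`, which is why `Λ` is filtered by powers of the integer `p`.
  let ρΛ : G →* Module.End ℤ Λ :=
    { toFun g := AddMonoidHom.toIntLinearMap
        { toFun x := ⟨ρ g x, hstab g x x.2⟩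
          map_zero' := by simp
          map_add' x y := by ext; simp }
      map_one' := by ext; simp
      map_mul' g h := by ext; simp }
  have h1 := Module.End.map_eq_one_of_forall_exists_pow_eq_of_isLocalRing (R := ℤ_[p]) p
    (by simpa using PadicInt.p_nonunit) ρΛ hg
  refine LinearMap.ext_on hspan fun v hv => ?_
  exact congrArg Subtype.val (LinearMap.congr_fun h1 ⟨v, hv⟩)

theorem dim_one_of_stable_lattice_general
    (p : ℕ) [Fact p.Prime]
    (F L : Type) [Field F] [Field L]
    [Algebra ℚ_[p] F]
    [Algebra ℚ_[p] L] [FiniteDimensional ℚ_[p] L]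
    [Algebra ℤ_[p] L] [IsScalarTower ℤ_[p] ℚ_[p] L]
    (V : Type) [AddCommGroup V] [Module L V] [FiniteDimensional L V]
    (ρ : GL (Fin 2) F →* (V →ₗ[L] V))
    -- `V` is absolutely irreducible: after any field extension `L'` of `L`, the
    -- base-changed representation has no invariant subspaces besides `⊥` and `⊤`,
    -- and is nonzero.
    (habs : ∀ (L' : Type) [Field L'] [Algebra L L'],
      (⊤ : Submodule L' (L' ⊗[L] V)) ≠ ⊥ ∧
      ∀ U : Submodule L' (L' ⊗[L] V),
        (∀ (g : GL (Fin 2) F) (x : L' ⊗[L] V), x ∈ U → (ρ g).baseChange L' x ∈ U) →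
        U = ⊥ ∨ U = ⊤)
    [Module (integralClosure ℤ_[p] L) V]
    (Λ : Submodule (integralClosure ℤ_[p] L) V)
    (hfg : Λ.FG)
    (hspan : Submodule.span L (Λ : Set V) = ⊤)
    (hstab : ∀ (g : GL (Fin 2) F), ∀ v ∈ Λ, ρ g v ∈ Λ) :
    Module.finrank L V = 1 := by
  have : CharZero F := charZero_of_injective_algebraMap (algebraMap ℚ_[p] F).injective
  have : Module.Finite ℤ_[p] (integralClosure ℤ_[p] L) :=
    IsIntegralClosure.finite ℤ_[p] ℚ_[p] L _
  have hkill (t : TransvectionStruct (Fin 2) F) : ρ t.toSpecialLinearGroup = 1 :=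
    map_eq_one_of_forall_exists_pow_eq_of_stable_lattice p ρ Λ hfg hspan hstab
      fun N hN => by
        obtain ⟨s, hs⟩ := t.exists_pow_eq_toSpecialLinearGroup hN
        exact ⟨s, by rw [← map_pow, hs]⟩
  obtain ⟨hne, hirr⟩ := habs (AlgebraicClosure L)
  obtain ⟨w, -, hw⟩ := (Submodule.ne_bot_iff _).mp hne
  have : Nontrivial (AlgebraicClosure L ⊗[L] V) := nontrivial_of_ne w 0 hw
  rw [← Module.finrank_baseChange (R := AlgebraicClosure L)]
  refine Module.End.finrank_eq_one_of_commute (fun g => (ρ g).baseChange _) (fun g h => ?_) hirr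
  simp only [Commute, SemiconjBy, ← LinearMap.baseChange_mul,
    (GeneralLinearGroup.commute_map_of_map_transvection_eq_one ρ hkill g h).eq]

/-- Let `F` be a finite extension of `ℚ_p`, `G = GL₂(F)`, `L` a finite
extension of `ℚ_p` with ring of integers `A` (the integral closure of `ℤ_p` in `L`),
and `V` an absolutely irreducible finite-dimensional `L`-linear representation of `G`.
If `G` stabilizes an `A`-lattice in `V` (a finitely generated `A`-submodule spanning
`V` over `L`), then `dim_L V = 1`, i.e. `V` is a character. -/
theorem dim_one_of_stable_lattice
    (p : ℕ) [Fact p.Prime]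
    (F L : Type) [Field F] [Field L]
    [Algebra ℚ_[p] F] [FiniteDimensional ℚ_[p] F]
    [Algebra ℚ_[p] L] [FiniteDimensional ℚ_[p] L]
    [Algebra ℤ_[p] L] [IsScalarTower ℤ_[p] ℚ_[p] L]
    (V : Type) [AddCommGroup V] [Module L V] [FiniteDimensional L V]
    (ρ : GL (Fin 2) F →* (V →ₗ[L] V))
    -- `V` is absolutely irreducible: after any field extension `L'` of `L`, the
    -- base-changed representation has no invariant subspaces besides `⊥` and `⊤`,
    -- and is nonzero.
    (habs : ∀ (L' : Type) [Field L'] [Algebra L L'],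
      (⊤ : Submodule L' (L' ⊗[L] V)) ≠ ⊥ ∧
      ∀ U : Submodule L' (L' ⊗[L] V),
        (∀ (g : GL (Fin 2) F) (x : L' ⊗[L] V), x ∈ U → (ρ g).baseChange L' x ∈ U) →
        U = ⊥ ∨ U = ⊤)
    [Module (integralClosure ℤ_[p] L) V] [IsScalarTower (integralClosure ℤ_[p] L) L V]
    (Λ : Submodule (integralClosure ℤ_[p] L) V)
    (hfg : Λ.FG)
    (hspan : Submodule.span L (Λ : Set V) = ⊤)
    (hstab : ∀ (g : GL (Fin 2) F), ∀ v ∈ Λ, ρ g v ∈ Λ) :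
    Module.finrank L V = 1 :=
  dim_one_of_stable_lattice_general p F L V ρ habs Λ hfg hspan hstab
end
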